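/- arXiv:2601.18994 — 3 statements merged into one kernel-verified Lean document; each statement's English description precedes it below -/
import Mathlib

section
/- For every integer n ≥ 0 with m := nk/2 ∈ ℤ, A(n) = (2^{m+(c−2)/2} · Γ(m + c/2) / ((2π)^{c/2} · n!)) · ∫_{S^{c−1}} V(x)^n ω(dx), where ω is the standard surface (volume) measure on the unit sphere S^{c−1} ⊂ ℝ^c and Γ is the gamma function. -/
/-!
Both sides compute the Gaussian integral `∫_{ℝ^c} P(x) e^{-‖x‖²/2} dx` of the homogeneous
polynomial `P = V^n` of degree `2m`. In Cartesian coordinates it factors into one-dimensional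
moments `∫ t^j e^{-t²/2} dt`, which are `(j-1)‼ √(2π)` for even `j` and vanish for odd `j`; only
the monomials `x^{2s}` survive and the integral is `(2π)^{c/2} n! A(n)`. In polar coordinates
`x = r y`, homogeneity gives `P(r y) = r^{2m} P(y)`, so the integral is
`∫_0^∞ r^{2m+c-1} e^{-r²/2} dr · ∫_{S^{c-1}} P = 2^{m+(c-2)/2} Γ(m + c/2) ∫_{S^{c-1}} P`.
-/

open MeasureTheory MvPolynomial

/-- `A(n)`: the `|Aut|⁻¹`-weighted count of `c`-edge-colored `k`-regular multigraphs on
`n` vertices with vertex weights given by the coefficients of `V`, expressed as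
`∑_{s, |s| = nk/2} (∏ i (2 sᵢ - 1)!!) · [x^{2s}] (V^n / n!)`. -/
noncomputable def Acount (c k : ℕ) (V : MvPolynomial (Fin c) ℝ) (n : ℕ) : ℝ :=
  ∑ s ∈ Finset.Nat.antidiagonalTuple c (n * k / 2),
    (∏ i, (Nat.doubleFactorial (2 * s i - 1) : ℝ)) *
      (MvPolynomial.coeff (Finsupp.equivFunOnFinite.symm fun i => 2 * s i) (V ^ n)
        / (Nat.factorial n : ℝ))

open Real Set Finset
open scoped Nat

lemma integral_Ioi_pow_mul_exp_neg_sq_div_two (j : ℕ) :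
    ∫ r in Ioi (0 : ℝ), r ^ j * exp (-r ^ 2 / 2) =
      2 ^ (((j : ℝ) - 1) / 2) * Gamma ((j + 1) / 2) := by
  have hq : (-1 : ℝ) < j := neg_one_lt_zero.trans_le (Nat.cast_nonneg j)
  rw [show (fun r : ℝ => r ^ j * exp (-r ^ 2 / 2)) =
        fun r => r ^ (j : ℝ) * exp (-(1 / 2) * r ^ (2 : ℝ)) by
      ext r; rw [rpow_natCast, rpow_two]; ring_nf,
    integral_rpow_mul_exp_neg_mul_rpow two_pos hq one_half_pos, one_div, inv_rpow zero_le_two,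
    ← rpow_neg zero_le_two, neg_div, neg_neg,
    show ((j : ℝ) - 1) / 2 = (j + 1) / 2 - 1 by ring, rpow_sub_one two_ne_zero]
  ring

lemma integrable_pow_mul_exp_neg_sq_div_two (j : ℕ) :
    Integrable fun x : ℝ => x ^ j * exp (-x ^ 2 / 2) := by
  convert integrable_rpow_mul_exp_neg_mul_sq one_half_pos
    (neg_one_lt_zero.trans_le (Nat.cast_nonneg j)) using 2 with x
  rw [rpow_natCast]
  ring_nf

def gaussianMoment (j : ℕ) : ℝ := if Even j then ((j - 1)‼ : ℝ) else 0

lemma integral_pow_mul_exp_neg_sq_div_two (j : ℕ) :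
    ∫ x : ℝ, x ^ j * exp (-x ^ 2 / 2) = gaussianMoment j * √(2 * π) := by
  rcases Nat.even_or_odd j with ⟨t, rfl⟩ | hodd
  · have habs : (fun x : ℝ => x ^ (t + t) * exp (-x ^ 2 / 2)) =
        fun x => |x| ^ (t + t) * exp (-|x| ^ 2 / 2) := by
      ext x; rw [sq_abs, ← two_mul, pow_mul, pow_mul, sq_abs]
    rw [habs, integral_comp_abs (f := fun x => x ^ (t + t) * exp (-x ^ 2 / 2)),
      integral_Ioi_pow_mul_exp_neg_sq_div_two, gaussianMoment, if_pos ⟨t, rfl⟩,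
      show (((t + t : ℕ) : ℝ) + 1) / 2 = t + 1 / 2 by push_cast; ring, Gamma_nat_add_half,
      show t + t - 1 = 2 * t - 1 by omega,
      show (((t + t : ℕ) : ℝ) - 1) / 2 = t - 1 / 2 by push_cast; ring,
      rpow_sub two_pos, rpow_natCast, ← sqrt_eq_rpow, sqrt_mul zero_le_two]
    field_simp
    norm_num
  · rw [gaussianMoment, if_neg (Nat.not_even_iff_odd.2 hodd), zero_mul]
    have h := integral_neg_eq_self (fun x : ℝ => x ^ j * exp (-x ^ 2 / 2)) volume
    simp only [hodd.neg_pow, neg_sq, neg_mul, integral_neg] at h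
    linarith

namespace MvPolynomial

variable {σ R : Type*} [Fintype σ] [CommSemiring R] {P : MvPolynomial σ R} {N : ℕ}

lemma IsHomogeneous.sum_eq_of_mem_support (hP : P.IsHomogeneous N) {d : σ →₀ ℕ}
    (hd : d ∈ P.support) : ∑ i, d i = N := by
  rw [hP.degree_eq_sum_deg_support hd]
  exact (sum_subset (subset_univ _) fun i _ hi => Finsupp.notMem_support_iff.1 hi).symm

lemma IsHomogeneous.eval_smul (hP : P.IsHomogeneous N) (r : R) (x : σ → R) :
    eval (r • x) P = r ^ N * eval x P := by
  rw [eval_eq', eval_eq', mul_sum]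
  refine sum_congr rfl fun d hd => ?_
  simp only [Pi.smul_apply, smul_eq_mul, mul_pow, prod_mul_distrib, prod_pow_eq_pow_sum,
    hP.sum_eq_of_mem_support hd]
  ring

end MvPolynomial

lemma integral_eval_mul_prod_exp_neg_sq_div_two {σ : Type*} [Fintype σ] (P : MvPolynomial σ ℝ) :
    ∫ y : σ → ℝ, eval y P * ∏ i, exp (-y i ^ 2 / 2) =
      (∑ d ∈ P.support, coeff d P * ∏ i, gaussianMoment (d i)) *
        √(2 * π) ^ Fintype.card σ := by
  have hexpand : (fun y : σ → ℝ => eval y P * ∏ i, exp (-y i ^ 2 / 2)) =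
      fun y => ∑ d ∈ P.support, coeff d P * ∏ i, (y i ^ d i * exp (-y i ^ 2 / 2)) := by
    ext y
    rw [eval_eq', sum_mul]
    exact sum_congr rfl fun d _ => by rw [mul_assoc, prod_mul_distrib]
  rw [hexpand, integral_finsetSum _ fun d _ =>
      (Integrable.fintype_prod fun i =>
        integrable_pow_mul_exp_neg_sq_div_two (d i)).const_mul _, sum_mul]
  refine sum_congr rfl fun d _ => ?_
  rw [integral_const_mul, integral_fintype_prod_volume_eq_prod
    (fun i t => t ^ d i * exp (-t ^ 2 / 2))]
  simp only [integral_pow_mul_exp_neg_sq_div_two, prod_mul_distrib, prod_const, card_univ,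
    mul_assoc]

lemma sum_coeff_mul_prod_gaussianMoment {c N : ℕ} {P : MvPolynomial (Fin c) ℝ}
    (hP : P.IsHomogeneous (2 * N)) :
    ∑ d ∈ P.support, coeff d P * ∏ i, gaussianMoment (d i) =
      ∑ s ∈ Finset.Nat.antidiagonalTuple c N,
        (∏ i, ((2 * s i - 1)‼ : ℝ)) * coeff (Finsupp.equivFunOnFinite.symm fun i => 2 * s i) P := by
  symm
  refine sum_bij_ne_zero (fun s _ _ => Finsupp.equivFunOnFinite.symm fun i => 2 * s i)
    (fun s _ hs => mem_support_iff.2 (right_ne_zero_of_mul hs)) ?_ ?_ ?_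
  · intro s _ _ t _ _ hst
    funext i
    simpa using DFunLike.congr_fun hst i
  · intro d hd hne
    have heven : ∀ i, Even (d i) := fun i => by
      by_contra hodd
      exact hne (by rw [prod_eq_zero (mem_univ i) (by simp [gaussianMoment, hodd]), mul_zero])
    have hdouble : (Finsupp.equivFunOnFinite.symm fun i => 2 * (d i / 2)) = d := by
      ext i
      exact Nat.mul_div_cancel' (heven i).two_dvd
    refine ⟨fun i => d i / 2, ?_, ?_, hdouble⟩
    · rw [Finset.Nat.mem_antidiagonalTuple]
      have hsum : ∑ i, d i = 2 * ∑ i, d i / 2 := by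
        rw [mul_sum]
        exact sum_congr rfl fun i _ => (Nat.mul_div_cancel' (heven i).two_dvd).symm
      have := hP.sum_eq_of_mem_support hd
      omega
    · rw [hdouble]
      refine mul_ne_zero (prod_ne_zero_iff.2 fun i _ => ?_) (mem_support_iff.1 hd)
      exact_mod_cast (Nat.doubleFactorial_pos _).ne'
  · intro s _ _
    rw [mul_comm]
    congr 1
    exact prod_congr rfl fun i _ => by simp [gaussianMoment]

namespace MeasureTheory

lemma integral_volumeIoiPow (d : ℕ) (h : ℝ → ℝ) :
    ∫ r : Ioi (0 : ℝ), h r ∂Measure.volumeIoiPow d = ∫ r in Ioi (0 : ℝ), r ^ d * h r := by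
  simp only [Measure.volumeIoiPow, ENNReal.ofReal]
  rw [integral_withDensity_eq_integral_smul (measurable_subtype_coe.pow_const _).real_toNNReal,
    integral_subtype_comap measurableSet_Ioi fun a : ℝ => (a ^ d).toNNReal • h a]
  refine setIntegral_congr_fun measurableSet_Ioi fun r hr => ?_
  rw [NNReal.smul_def, Real.coe_toNNReal _ (pow_nonneg hr.out.le _), smul_eq_mul]

variable {E : Type*} [NormedAddCommGroup E] [NormedSpace ℝ E] [FiniteDimensional ℝ E]
  [MeasurableSpace E] [BorelSpace E] [Nontrivial E] (μ : Measure E) [μ.IsAddHaarMeasure]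

lemma integral_mul_radial_of_homogeneous {f : E → ℝ} {M : ℕ}
    (hf : ∀ r : ℝ, 0 < r → ∀ y, f (r • y) = r ^ M * f y) (g : ℝ → ℝ) :
    ∫ x, f x * g ‖x‖ ∂μ =
      (∫ r in Ioi (0 : ℝ), r ^ (M + (Module.finrank ℝ E - 1)) * g r) *
        ∫ y, f y ∂μ.toSphere := by
  let F : E → ℝ := fun x => f x * g ‖x‖
  calc ∫ x, F x ∂μ
      = ∫ x : ({0}ᶜ : Set E), F x ∂μ.comap Subtype.val := by
        rw [integral_subtype_comap (measurableSet_singleton _).compl F,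
          restrict_compl_singleton]
    _ = ∫ p : Metric.sphere (0 : E) 1 × Ioi (0 : ℝ), F ((homeomorphUnitSphereProd E).symm p)
          ∂μ.toSphere.prod (Measure.volumeIoiPow (Module.finrank ℝ E - 1)) := by
        rw [← μ.measurePreserving_homeomorphUnitSphereProd.integral_comp
          (Homeomorph.measurableEmbedding _)]
        simp only [Homeomorph.symm_apply_apply]
    _ = ∫ p : Metric.sphere (0 : E) 1 × Ioi (0 : ℝ), f p.1 * (p.2 ^ M * g p.2)
          ∂μ.toSphere.prod (Measure.volumeIoiPow (Module.finrank ℝ E - 1)) := by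
        refine integral_congr_ae (.of_forall fun ⟨⟨y, hy⟩, ⟨r, hr⟩⟩ => ?_)
        have hnorm : ‖r • y‖ = r := by
          rw [norm_smul, mem_sphere_zero_iff_norm.1 hy, Real.norm_of_nonneg hr.out.le, mul_one]
        change f (r • y) * g ‖r • y‖ = _
        rw [hf r hr y, hnorm]
        ring
    _ = _ := by
        rw [integral_prod_mul (fun y : Metric.sphere (0 : E) 1 => f y)
          (fun r : Ioi (0 : ℝ) => (r : ℝ) ^ M * g r),
          integral_volumeIoiPow _ fun r => r ^ M * g r, mul_comm]
        congr 2 with r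
        ring

end MeasureTheory

lemma EuclideanSpace.exp_neg_norm_sq_div_two {ι : Type*} [Fintype ι]
    (x : EuclideanSpace ℝ ι) : exp (-‖x‖ ^ 2 / 2) = ∏ i, exp (-x i ^ 2 / 2) := by
  simp only [EuclideanSpace.norm_sq_eq, Real.norm_eq_abs, sq_abs, ← exp_sum, neg_div,
    ← sum_neg_distrib, sum_div]

theorem stmt_1_general (k c : ℕ) (hc : 1 ≤ c)
    (V : MvPolynomial (Fin c) ℝ) (hV : V.IsHomogeneous k)
    (n : ℕ) (hn : 2 ∣ n * k) :
    Acount c k V n =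
      (2 : ℝ) ^ (((n * k / 2 : ℕ) : ℝ) + ((c : ℝ) - 2) / 2) *
        Real.Gamma (((n * k / 2 : ℕ) : ℝ) + (c : ℝ) / 2) /
        ((2 * Real.pi) ^ ((c : ℝ) / 2) * (Nat.factorial n : ℝ)) *
      ∫ x : Metric.sphere (0 : EuclideanSpace ℝ (Fin c)) 1,
        (MvPolynomial.eval (fun i => (x : EuclideanSpace ℝ (Fin c)) i) V) ^ n
        ∂((volume : Measure (EuclideanSpace ℝ (Fin c))).toSphere) := by
  set m := n * k / 2
  have hP : (V ^ n).IsHomogeneous (2 * m) := by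
    rw [Nat.mul_div_cancel' hn, mul_comm]
    exact hV.pow n
  have : Nontrivial (EuclideanSpace ℝ (Fin c)) :=
    Module.nontrivial_of_finrank_pos (by rw [finrank_euclideanSpace_fin]; omega)
  set G := ∫ x : EuclideanSpace ℝ (Fin c), eval (fun i => x i) (V ^ n) * exp (-‖x‖ ^ 2 / 2)
  have hcartesian : G = Acount c k V n * n ! * (2 * π) ^ ((c : ℝ) / 2) := by
    calc G = ∫ y : Fin c → ℝ, eval y (V ^ n) * ∏ i, exp (-y i ^ 2 / 2) := by
          simp only [G, EuclideanSpace.exp_neg_norm_sq_div_two]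
          exact (PiLp.volume_preserving_ofLp (Fin c)).integral_comp
            (MeasurableEquiv.toLp 2 _).symm.measurableEmbedding
            fun y => eval y (V ^ n) * ∏ i, exp (-y i ^ 2 / 2)
      _ = _ := by
          rw [integral_eval_mul_prod_exp_neg_sq_div_two, sum_coeff_mul_prod_gaussianMoment hP,
            Fintype.card_fin, sqrt_eq_rpow, ← rpow_natCast, ← rpow_mul (by positivity), Acount,
            sum_mul _ _ (n ! : ℝ)]
          congr 1
          · exact sum_congr rfl fun s _ => by field_simp
          · ring_nf
  have hpolar : G = 2 ^ ((m : ℝ) + ((c : ℝ) - 2) / 2) * Gamma (m + (c : ℝ) / 2) *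
      ∫ x : Metric.sphere (0 : EuclideanSpace ℝ (Fin c)) 1,
        eval (fun i => (x : EuclideanSpace ℝ (Fin c)) i) V ^ n
        ∂((volume : Measure (EuclideanSpace ℝ (Fin c))).toSphere) := by
    refine (integral_mul_radial_of_homogeneous volume
      (f := fun x : EuclideanSpace ℝ (Fin c) => eval (fun i => x i) (V ^ n))
      (fun r _ y => hP.eval_smul r fun i => y i) fun r => exp (-r ^ 2 / 2)).trans ?_
    simp only [finrank_euclideanSpace_fin, integral_Ioi_pow_mul_exp_neg_sq_div_two, map_pow]
    congr 3 <;> push_cast [Nat.cast_sub hc] <;> ring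
  rw [div_mul_eq_mul_div, eq_div_iff (by positivity), ← hpolar, hcartesian]
  ring

theorem stmt_1 (k c : ℕ) (hk : 3 ≤ k) (hc : 1 ≤ c)
    (V : MvPolynomial (Fin c) ℝ) (hV : V.IsHomogeneous k)
    (n : ℕ) (hn : 2 ∣ n * k) :
    Acount c k V n =
      (2 : ℝ) ^ (((n * k / 2 : ℕ) : ℝ) + ((c : ℝ) - 2) / 2) *
        Real.Gamma (((n * k / 2 : ℕ) : ℝ) + (c : ℝ) / 2) /
        ((2 * Real.pi) ^ ((c : ℝ) / 2) * (Nat.factorial n : ℝ)) *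
      ∫ x : Metric.sphere (0 : EuclideanSpace ℝ (Fin c)) 1,
        (MvPolynomial.eval (fun i => (x : EuclideanSpace ℝ (Fin c)) i) V) ^ n
        ∂((volume : Measure (EuclideanSpace ℝ (Fin c))).toSphere) :=
  stmt_1_general k c hc V hV n hn
end

section
/- Assume max_{x ∈ S^{c−1}} |V(x)| > 0. Then: (i) for every z ∈ Ψ, writing z = τ·x with τ ∈ ℂ∖{0} and x ∈ S^{c−1}, either x ∈ Φ or −x ∈ Φ; and (ii) for every x ∈ Φ, the set {z ∈ Ψ : z = τ·x or z = τ·(−x) for some τ ∈ ℂ∖{0}} has exactly k−2 elements. Equivalently, the map ν : Ψ → Φ/∼ (where ∼ identifies antipodal points), sending z = τ·x to the class of x, is well-defined and surjective, and every fiber of ν has cardinality k−2. -/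
open MvPolynomial

/-- `g(x) = -(x₁² + ⋯ + x_c²)/2 + V(x)`, extended to a polynomial over `ℂ`. -/
noncomputable def gC (c : ℕ) (V : MvPolynomial (Fin c) ℝ) : MvPolynomial (Fin c) ℂ :=
  MvPolynomial.map (algebraMap ℝ ℂ)
    (-(MvPolynomial.C (1 / 2 : ℝ) * ∑ i, MvPolynomial.X i ^ 2) + V)

/-- Critical points of `g` in the complex cone over the unit sphere `S^{c-1}`. -/
def critStar (c : ℕ) (V : MvPolynomial (Fin c) ℝ) : Set (Fin c → ℂ) :=
  {z | (∀ i, MvPolynomial.eval z (MvPolynomial.pderiv i (gC c V)) = 0) ∧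
    ∃ (τ : ℂ) (x : Fin c → ℝ), τ ≠ 0 ∧ (∑ i, x i ^ 2) = 1 ∧ z = fun i => τ * (x i : ℂ)}

/-- Points `z = τ·x` of `critStar` with `|τ|` minimal; since `|τ|² = ∑ |zᵢ|²`,
minimality of `|τ|` is expressed via the norm of `z`. -/
def PsiSet (c : ℕ) (V : MvPolynomial (Fin c) ℝ) : Set (Fin c → ℂ) :=
  {z ∈ critStar c V | ∀ w ∈ critStar c V,
    ∑ i, ‖z i‖ ^ 2 ≤ ∑ i, ‖w i‖ ^ 2}

/-- The set of global maximizers of `x ↦ |V(x)|` on the unit sphere `S^{c-1}`. -/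
def PhiSet (c : ℕ) (V : MvPolynomial (Fin c) ℝ) : Set (Fin c → ℝ) :=
  {x | (∑ i, x i ^ 2) = 1 ∧
    ∀ y : Fin c → ℝ, (∑ i, y i ^ 2) = 1 →
      |MvPolynomial.eval y V| ≤ |MvPolynomial.eval x V|}

/-!
Write a point of `crit*(g)` as `τ • x` with `x` on the sphere. Since `∇V` is homogeneous of degree
`k - 1`, the equation `∇g(τ x) = 0` reads `τ^(k-2) ∇V(x) = x`; pairing with `x` and using Euler's
identity, this says `∇V(x) = k V(x) x` and `τ^(k-2) k V(x) = 1`. Thus `|τ|^(k-2) = 1 / (k |V(x)|)`,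
so `|τ|` is minimal exactly when `|V(x)|` is maximal. Conversely every maximizer of `|V|` on the
sphere satisfies `∇V(x) = k V(x) x` (Lagrange multipliers plus Euler), so the points of `Ψ` over
`±x ∈ Φ` are the `τ • x` with `τ` one of the `k - 2` roots of `τ^(k-2) = 1 / (k V(x))`.
-/

namespace MvPolynomial

theorem IsHomogeneous.eval_smul_s5 {R σ : Type*} [CommSemiring R] {φ : MvPolynomial σ R} {n : ℕ}
    (hφ : φ.IsHomogeneous n) (t : R) (y : σ → R) :
    eval (t • y) φ = t ^ n * eval y φ := by
  rw [eval_eq, eval_eq, Finset.mul_sum]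
  refine Finset.sum_congr rfl fun d hd => ?_
  have hdeg : ∑ i ∈ d.support, d i = n := by
    rw [← hφ (mem_support_iff.mp hd), Finsupp.weight_apply, Finsupp.sum]; simp
  simp_rw [Pi.smul_apply, smul_eq_mul, mul_pow, Finset.prod_mul_distrib,
    Finset.prod_pow_eq_pow_sum, hdeg]
  ring

theorem IsHomogeneous.sum_mul_eval_pderiv {R σ : Type*} [CommSemiring R] [Fintype σ]
    {φ : MvPolynomial σ R} {n : ℕ} (hφ : φ.IsHomogeneous n) (x : σ → R) :
    ∑ i, x i * eval x (pderiv i φ) = n * eval x φ := by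
  simpa [nsmul_eq_mul] using congrArg (eval x) hφ.sum_X_mul_pderiv

theorem eval_ofReal_map {σ : Type*} (p : MvPolynomial σ ℝ) (x : σ → ℝ) :
    eval (fun i => (x i : ℂ)) (map (algebraMap ℝ ℂ) p) = eval x p := by
  rw [eval_map]
  exact (eval₂_comp _ x p).symm

theorem pderiv_sum_X_sq {R σ : Type*} [CommSemiring R] [Fintype σ] (i : σ) :
    pderiv i (∑ j, X j ^ 2 : MvPolynomial σ R) = 2 * X i := by
  classical
  simp [pderiv_X, Pi.single_apply]

theorem hasStrictFDerivAt_eval {𝕜 σ : Type*} [NontriviallyNormedField 𝕜] [Fintype σ]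
    (p : MvPolynomial σ 𝕜) (x : σ → 𝕜) :
    HasStrictFDerivAt (fun y => eval y p)
      (∑ i, eval x (pderiv i p) • (ContinuousLinearMap.proj i : (σ → 𝕜) →L[𝕜] 𝕜)) x := by
  classical
  induction p using MvPolynomial.induction_on with
  | C a =>
    simp only [eval_C]
    refine (hasStrictFDerivAt_const (𝕜 := 𝕜) (E := σ → 𝕜) a x).congr_fderiv ?_
    ext v
    simp
  | add p q hp hq =>
    simp only [map_add]
    refine (hp.add hq).congr_fderiv ?_
    ext v
    simp [add_mul, Finset.sum_add_distrib]
  | mul_X p i hp =>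
    have hXi : HasStrictFDerivAt (fun y : σ → 𝕜 => y i)
        (ContinuousLinearMap.proj i : (σ → 𝕜) →L[𝕜] 𝕜) x :=
      (ContinuousLinearMap.proj i : (σ → 𝕜) →L[𝕜] 𝕜).hasStrictFDerivAt
    simp only [eval_mul, eval_X]
    refine (hp.mul hXi).congr_fderiv ?_
    ext v
    simp [pderiv_X, Pi.single_apply, apply_ite (eval x), add_mul, Finset.sum_add_distrib,
      Finset.mul_sum, mul_assoc]

theorem exists_eval_pderiv_eq_mul_of_isLocalExtrOn_sphere {σ : Type*} [Fintype σ]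
    (p : MvPolynomial σ ℝ) {x : σ → ℝ} (hx : ∑ i, x i ^ 2 = 1)
    (hextr : IsLocalExtrOn (fun y => eval y p) {y | ∑ i, y i ^ 2 = 1} x) :
    ∃ μ : ℝ, ∀ i, eval x (pderiv i p) = μ * x i := by
  classical
  have hQ := hasStrictFDerivAt_eval (∑ i, X i ^ 2 : MvPolynomial σ ℝ) x
  simp only [pderiv_sum_X_sq, eval_mul, eval_X, eval_ofNat] at hQ
  have hsphere : {y : σ → ℝ | ∑ i, y i ^ 2 = 1} =
      {y | eval y (∑ i, X i ^ 2) = eval x (∑ i, X i ^ 2)} := by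
    simp [hx]
  rw [hsphere] at hextr
  obtain ⟨a, b, hab, hlin⟩ :=
    hextr.exists_multipliers_of_hasStrictFDerivAt_1d hQ (hasStrictFDerivAt_eval p x)
  have hcoord (l : σ) : a * (2 * x l) + b * eval x (pderiv l p) = 0 := by
    simpa [Pi.single_apply] using DFunLike.congr_fun hlin (Pi.single l 1)
  have hb : b ≠ 0 := by
    rintro rfl
    have ha : a ≠ 0 := fun ha => hab (by simp [ha])
    have hx0 : ∀ l, x l = 0 := fun l => by simpa [ha] using hcoord l
    simp [hx0] at hx
  exact ⟨-(2 * a) / b, fun l => by field_simp; linarith [hcoord l]⟩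

theorem IsHomogeneous.eval_pderiv_eq_of_isLocalExtrOn_sphere {σ : Type*} [Fintype σ]
    {p : MvPolynomial σ ℝ} {n : ℕ} (hp : p.IsHomogeneous n) {x : σ → ℝ}
    (hx : ∑ i, x i ^ 2 = 1)
    (hextr : IsLocalExtrOn (fun y => eval y p) {y | ∑ i, y i ^ 2 = 1} x) (i : σ) :
    eval x (pderiv i p) = n * eval x p * x i := by
  obtain ⟨μ, hμ⟩ := exists_eval_pderiv_eq_mul_of_isLocalExtrOn_sphere p hx hextr
  have hμn : μ = n * eval x p := by
    rw [← hp.sum_mul_eval_pderiv]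
    simp_rw [hμ, mul_left_comm _ μ, ← Finset.mul_sum, ← sq, hx, mul_one]
  rw [hμ, hμn]

end MvPolynomial

theorem isExtrOn_of_isMaxOn_abs {α : Type*} {f : α → ℝ} {s : Set α} {a : α}
    (h : IsMaxOn (fun y => |f y|) s a) : IsExtrOn f s a := by
  rcases le_total 0 (f a) with h0 | h0
  · exact Or.inr fun y hy => (le_abs_self _).trans ((h hy).trans (abs_of_nonneg h0).le)
  · refine Or.inl fun y hy => ?_
    have hy' : |f y| ≤ |f a| := h hy
    rw [abs_of_nonpos h0] at hy'
    show f a ≤ f y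
    linarith [neg_abs_le (f y)]

theorem le_iff_le_of_pow_mul_eq_one {a b u v : ℝ} {m : ℕ} (hm : m ≠ 0) (ha : 0 ≤ a) (hb : 0 ≤ b)
    (hau : a ^ m * u = 1) (hbv : b ^ m * v = 1) : a ≤ b ↔ v ≤ u := by
  have hpos {r w : ℝ} (hr : 0 ≤ r) (hrw : r ^ m * w = 1) : 0 < r ^ m :=
    (pow_nonneg hr m).lt_of_ne (left_ne_zero_of_mul_eq_one hrw).symm
  rw [eq_inv_of_mul_eq_one_right hau, eq_inv_of_mul_eq_one_right hbv,
    inv_le_inv₀ (hpos hb hbv) (hpos ha hau), pow_le_pow_iff_left₀ ha hb hm]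

theorem isCompact_setOf_sum_sq_eq_one {σ : Type*} [Fintype σ] :
    IsCompact {y : σ → ℝ | ∑ i, y i ^ 2 = 1} := by
  refine Metric.isCompact_of_isClosed_isBounded (isClosed_eq (by fun_prop) continuous_const)
    ((Metric.isBounded_closedBall (x := 0) (r := 1)).subset fun y hy => ?_)
  rw [Metric.mem_closedBall, dist_zero_right, pi_norm_le_iff_of_nonneg zero_le_one]
  intro i
  have hyi : y i ^ 2 ≤ 1 :=
    hy ▸ Finset.single_le_sum (fun j _ => sq_nonneg (y j)) (Finset.mem_univ i)
  exact (sq_le_one_iff_abs_le_one _).1 hyi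

theorem Complex.ncard_setOf_pow_eq {n : ℕ} (hn : 0 < n) {a : ℂ} (ha : a ≠ 0) :
    {τ : ℂ | τ ^ n = a}.ncard = n := by
  classical
  have hζ := Complex.isPrimitiveRoot_exp n hn.ne'
  have : {τ : ℂ | τ ^ n = a} = ↑(Polynomial.nthRoots n a).toFinset := by
    ext; simp [Polynomial.mem_nthRoots hn]
  rw [this, Set.ncard_coe_finset, Multiset.toFinset_card_of_nodup (hζ.nthRoots_nodup ha),
    hζ.card_nthRoots, if_pos (IsAlgClosed.exists_pow_nat_eq a hn)]

theorem sum_norm_mul_ofReal_sq {c : ℕ} (τ : ℂ) {x : Fin c → ℝ} (hx : ∑ i, x i ^ 2 = 1) :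
    ∑ i, ‖τ * (x i : ℂ)‖ ^ 2 = ‖τ‖ ^ 2 := by
  simp_rw [norm_mul, Complex.norm_real, Real.norm_eq_abs, mul_pow, sq_abs, ← Finset.mul_sum, hx,
    mul_one]

theorem injective_mul_ofReal {c : ℕ} {x : Fin c → ℝ} (hx : ∑ i, x i ^ 2 = 1) :
    Function.Injective fun τ : ℂ => fun i => τ * (x i : ℂ) := by
  obtain ⟨i, hi⟩ : ∃ i, x i ≠ 0 := by
    by_contra! h
    simp [h] at hx
  exact fun s t hst => mul_right_cancel₀ (Complex.ofReal_ne_zero.mpr hi) (congrFun hst i)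

theorem PhiSet_nonempty {c : ℕ} (V : MvPolynomial (Fin c) ℝ)
    (hne : ∃ x : Fin c → ℝ, ∑ i, x i ^ 2 = 1) : (PhiSet c V).Nonempty := by
  obtain ⟨x, hx, hmaxOn⟩ := isCompact_setOf_sum_sq_eq_one.exists_isMaxOn hne
    (continuous_abs.comp (continuous_eval V)).continuousOn
  exact ⟨x, hx, fun y hy => hmaxOn hy⟩

section

variable {k c : ℕ} {V : MvPolynomial (Fin c) ℝ}

theorem eval_pderiv_gC (i : Fin c) (z : Fin c → ℂ) :
    eval z (pderiv i (gC c V)) = -z i + eval z (map (algebraMap ℝ ℂ) (pderiv i V)) := by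
  rw [gC, pderiv_map]
  simp only [map_add, map_neg, pderiv_C_mul, pderiv_sum_X_sq]
  simp

theorem mem_critStar_iff_pow_mul_eval_pderiv (hk : 2 ≤ k) (hV : V.IsHomogeneous k) {τ : ℂ}
    (hτ : τ ≠ 0) {x : Fin c → ℝ} (hx : ∑ i, x i ^ 2 = 1) :
    (fun i => τ * (x i : ℂ)) ∈ critStar c V ↔ ∀ i, τ ^ (k - 2) * eval x (pderiv i V) = x i := by
  have hgrad (i : Fin c) : eval (fun j => τ * (x j : ℂ)) (pderiv i (gC c V)) =
      τ * (τ ^ (k - 2) * eval x (pderiv i V) - x i) := by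
    rw [eval_pderiv_gC, show (fun j => τ * (x j : ℂ)) = τ • fun j => (x j : ℂ) from rfl,
      ((hV.pderiv (i := i)).map _).eval_smul_s5, eval_ofReal_map, show k - 1 = k - 2 + 1 by omega]
    ring
  simp only [critStar, Set.mem_ofPred_eq, hgrad, mul_eq_zero, hτ, false_or, sub_eq_zero]
  exact and_iff_left ⟨τ, x, hτ, hx, rfl⟩

theorem mem_critStar_iff (hk : 2 ≤ k) (hV : V.IsHomogeneous k) {τ : ℂ} (hτ : τ ≠ 0)
    {x : Fin c → ℝ} (hx : ∑ i, x i ^ 2 = 1) :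
    (fun i => τ * (x i : ℂ)) ∈ critStar c V ↔
      (∀ i, eval x (pderiv i V) = k * eval x V * x i) ∧ τ ^ (k - 2) * (k * eval x V) = 1 := by
  rw [mem_critStar_iff_pow_mul_eval_pderiv hk hV hτ hx]
  set t := τ ^ (k - 2)
  constructor
  · intro h
    have hscale : t * (k * eval x V) = 1 := calc
      t * (k * eval x V) = t * ((∑ i, x i * eval x (pderiv i V) : ℝ) : ℂ) := by
        rw [hV.sum_mul_eval_pderiv]; push_cast; rfl
      _ = ∑ i, (x i : ℂ) * (t * eval x (pderiv i V)) := by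
        push_cast; rw [Finset.mul_sum]; exact Finset.sum_congr rfl fun i _ => by ring
      _ = 1 := by simp_rw [h, ← sq]; exact_mod_cast hx
    refine ⟨fun i => ?_, hscale⟩
    have : (eval x (pderiv i V) : ℂ) = k * eval x V * x i := by
      rw [← h i, ← mul_assoc, mul_comm _ t, hscale, one_mul]
    exact_mod_cast this
  · rintro ⟨hgrad, hscale⟩ i
    rw [hgrad i]
    push_cast
    linear_combination (x i : ℂ) * hscale

theorem eval_ne_zero_of_mem_PhiSet (hmax : ∃ x : Fin c → ℝ, ∑ i, x i ^ 2 = 1 ∧ eval x V ≠ 0)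
    {x : Fin c → ℝ} (hx : x ∈ PhiSet c V) : eval x V ≠ 0 := by
  obtain ⟨y, hy, hVy⟩ := hmax
  exact abs_pos.mp ((abs_pos.mpr hVy).trans_le (hx.2 y hy))

theorem natCast_mul_eval_ne_zero_of_mem_PhiSet (hk : k ≠ 0)
    (hmax : ∃ x : Fin c → ℝ, ∑ i, x i ^ 2 = 1 ∧ eval x V ≠ 0)
    {x : Fin c → ℝ} (hx : x ∈ PhiSet c V) : (k * eval x V : ℂ) ≠ 0 :=
  mul_ne_zero (Nat.cast_ne_zero.mpr hk)
    (Complex.ofReal_ne_zero.mpr (eval_ne_zero_of_mem_PhiSet hmax hx))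

theorem eval_pderiv_eq_of_mem_PhiSet (hV : V.IsHomogeneous k) {x : Fin c → ℝ}
    (hx : x ∈ PhiSet c V) (i : Fin c) :
    eval x (pderiv i V) = k * eval x V * x i :=
  hV.eval_pderiv_eq_of_isLocalExtrOn_sphere hx.1
    (isExtrOn_of_isMaxOn_abs fun y hy => hx.2 y hy).localize i

theorem sum_norm_sq_le_iff_abs_eval_le (hk : 3 ≤ k) {τ τ' : ℂ} {x x' : Fin c → ℝ}
    (hx : ∑ i, x i ^ 2 = 1) (hx' : ∑ i, x' i ^ 2 = 1)
    (h : τ ^ (k - 2) * (k * eval x V) = 1) (h' : τ' ^ (k - 2) * (k * eval x' V) = 1) :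
    ∑ i, ‖τ * (x i : ℂ)‖ ^ 2 ≤ ∑ i, ‖τ' * (x' i : ℂ)‖ ^ 2 ↔ |eval x' V| ≤ |eval x V| := by
  have hnorm {σ : ℂ} {y : Fin c → ℝ} (hy : σ ^ (k - 2) * (k * eval y V) = 1) :
      ‖σ‖ ^ (k - 2) * (k * |eval y V|) = 1 := by
    simpa using congrArg norm hy
  rw [sum_norm_mul_ofReal_sq τ hx, sum_norm_mul_ofReal_sq τ' hx',
    pow_le_pow_iff_left₀ (norm_nonneg _) (norm_nonneg _) two_ne_zero,
    le_iff_le_of_pow_mul_eq_one (by omega) (norm_nonneg _) (norm_nonneg _) (hnorm h) (hnorm h'),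
    mul_le_mul_iff_right₀ (by positivity)]

theorem mem_PsiSet_of_mem_PhiSet (hk : 3 ≤ k) (hV : V.IsHomogeneous k) {τ : ℂ}
    {x : Fin c → ℝ} (hx : x ∈ PhiSet c V) (h : τ ^ (k - 2) * (k * eval x V) = 1) :
    (fun i => τ * (x i : ℂ)) ∈ PsiSet c V := by
  have hτ : τ ≠ 0 := ne_zero_pow (by omega) (left_ne_zero_of_mul_eq_one h)
  refine ⟨(mem_critStar_iff (by omega) hV hτ hx.1).2
    ⟨eval_pderiv_eq_of_mem_PhiSet hV hx, h⟩, ?_⟩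
  rintro w hw
  obtain ⟨τ', x', hτ', hx', rfl⟩ := hw.2
  have h' := ((mem_critStar_iff (by omega) hV hτ' hx').1 hw).2
  exact (sum_norm_sq_le_iff_abs_eval_le hk hx.1 hx' h h').2 (hx.2 x' hx')

theorem mem_PsiSet_iff (hk : 3 ≤ k) (hV : V.IsHomogeneous k)
    (hmax : ∃ x : Fin c → ℝ, ∑ i, x i ^ 2 = 1 ∧ eval x V ≠ 0)
    {τ : ℂ} (hτ : τ ≠ 0) {x : Fin c → ℝ} (hx : ∑ i, x i ^ 2 = 1) :
    (fun i => τ * (x i : ℂ)) ∈ PsiSet c V ↔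
      x ∈ PhiSet c V ∧ τ ^ (k - 2) * (k * eval x V) = 1 := by
  refine ⟨fun hz => ?_, fun ⟨hxΦ, h⟩ => mem_PsiSet_of_mem_PhiSet hk hV hxΦ h⟩
  have h := ((mem_critStar_iff (by omega) hV hτ hx).1 hz.1).2
  obtain ⟨x₀, hx₀⟩ := PhiSet_nonempty V (hmax.imp fun _ => And.left)
  have hk₀ := natCast_mul_eval_ne_zero_of_mem_PhiSet (k := k) (by omega) hmax hx₀
  obtain ⟨τ₀, hτ₀⟩ := IsAlgClosed.exists_pow_nat_eq (k * eval x₀ V : ℂ)⁻¹ (by omega : 0 < k - 2)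
  have h₀ : τ₀ ^ (k - 2) * (k * eval x₀ V) = 1 := by rw [hτ₀, inv_mul_cancel₀ hk₀]
  have hz₀ := mem_PsiSet_of_mem_PhiSet hk hV hx₀ h₀
  have hle := (sum_norm_sq_le_iff_abs_eval_le hk hx hx₀.1 h h₀).1 (hz.2 _ hz₀.1)
  exact ⟨⟨hx, fun y hy => (hx₀.2 y hy).trans hle⟩, h⟩

theorem fiber_PsiSet_eq_image (hk : 3 ≤ k) (hV : V.IsHomogeneous k)
    (hmax : ∃ x : Fin c → ℝ, ∑ i, x i ^ 2 = 1 ∧ eval x V ≠ 0)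
    {x : Fin c → ℝ} (hx : x ∈ PhiSet c V) :
    {z ∈ PsiSet c V | ∃ τ : ℂ, τ ≠ 0 ∧
        (z = (fun i => τ * (x i : ℂ)) ∨ z = fun i => τ * (-(x i) : ℂ))} =
      (fun τ : ℂ => fun i => τ * (x i : ℂ)) '' {τ | τ ^ (k - 2) = (k * eval x V : ℂ)⁻¹} := by
  have hk₀ := natCast_mul_eval_ne_zero_of_mem_PhiSet (k := k) (by omega) hmax hx
  have hPsi {τ : ℂ} (hτ : τ ≠ 0) : (fun i => τ * (x i : ℂ)) ∈ PsiSet c V ↔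
      τ ^ (k - 2) = (k * eval x V : ℂ)⁻¹ := by
    rw [mem_PsiSet_iff hk hV hmax hτ hx.1, and_iff_right hx]
    exact ⟨eq_inv_of_mul_eq_one_left, fun h => by rw [h, inv_mul_cancel₀ hk₀]⟩
  ext z
  constructor
  · rintro ⟨hz, τ, hτ, rfl | rfl⟩
    · exact ⟨τ, (hPsi hτ).1 hz, rfl⟩
    · have hneg : (fun i => τ * (-(x i) : ℂ)) = fun i => -τ * (x i : ℂ) := by
        funext i; ring
      rw [hneg] at hz ⊢
      exact ⟨-τ, (hPsi (neg_ne_zero.mpr hτ)).1 hz, rfl⟩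
  · rintro ⟨τ, (hτk : τ ^ (k - 2) = _), rfl⟩
    have hτ : τ ≠ 0 := ne_zero_pow (by omega) (hτk ▸ inv_ne_zero hk₀)
    exact ⟨(hPsi hτ).2 hτk, τ, hτ, Or.inl rfl⟩

end

theorem stmt_5_general (k c : ℕ) (hk : 3 ≤ k)
    (V : MvPolynomial (Fin c) ℝ) (hV : V.IsHomogeneous k)
    (hmax : ∃ x : Fin c → ℝ, (∑ i, x i ^ 2) = 1 ∧ MvPolynomial.eval x V ≠ 0) :
    -- (i) every decomposition `z = τ·x` of a point of `Ψ` has `x ∈ Φ` or `−x ∈ Φ`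
    (∀ z ∈ PsiSet c V, ∀ (τ : ℂ) (x : Fin c → ℝ), τ ≠ 0 → (∑ i, x i ^ 2) = 1 →
      z = (fun i => τ * (x i : ℂ)) →
        x ∈ PhiSet c V ∨ (fun i => -x i) ∈ PhiSet c V) ∧
    -- (ii) for every `x ∈ Φ`, the fiber of `Ψ` over `{x, −x}` has exactly `k − 2` elements
    (∀ x ∈ PhiSet c V,
      Set.ncard {z ∈ PsiSet c V | ∃ τ : ℂ, τ ≠ 0 ∧
        (z = (fun i => τ * (x i : ℂ)) ∨ z = fun i => τ * (-(x i) : ℂ))} = k - 2) := by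
  refine ⟨fun z hz τ x hτ hx hzx => ?_, fun x hx => ?_⟩
  · subst hzx
    exact Or.inl ((mem_PsiSet_iff hk hV hmax hτ hx).1 hz).1
  · rw [fiber_PsiSet_eq_image hk hV hmax hx,
      Set.ncard_image_of_injective _ (injective_mul_ofReal hx.1), Complex.ncard_setOf_pow_eq
        (by omega) (inv_ne_zero (natCast_mul_eval_ne_zero_of_mem_PhiSet (by omega) hmax hx))]

theorem stmt_5 (k c : ℕ) (hk : 3 ≤ k) (hc : 1 ≤ c)
    (V : MvPolynomial (Fin c) ℝ) (hV : V.IsHomogeneous k)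
    (hmax : ∃ x : Fin c → ℝ, (∑ i, x i ^ 2) = 1 ∧ MvPolynomial.eval x V ≠ 0) :
    -- (i) every decomposition `z = τ·x` of a point of `Ψ` has `x ∈ Φ` or `−x ∈ Φ`
    (∀ z ∈ PsiSet c V, ∀ (τ : ℂ) (x : Fin c → ℝ), τ ≠ 0 → (∑ i, x i ^ 2) = 1 →
      z = (fun i => τ * (x i : ℂ)) →
        x ∈ PhiSet c V ∨ (fun i => -x i) ∈ PhiSet c V) ∧
    -- (ii) for every `x ∈ Φ`, the fiber of `Ψ` over `{x, −x}` has exactly `k − 2` elements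
    (∀ x ∈ PhiSet c V,
      Set.ncard {z ∈ PsiSet c V | ∃ τ : ℂ, τ ≠ 0 ∧
        (z = (fun i => τ * (x i : ℂ)) ∨ z = fun i => τ * (-(x i) : ℂ))} = k - 2) :=
  stmt_5_general k c hk V hV hmax
end

section
/- Let 1 ≤ k ≤ c be integers. For every x ∈ ℝ^c with x_1² + ⋯ + x_c² = 1 one has |e_k(x)| ≤ binom(c,k) · c^{−k/2}, and equality holds at x = (c^{−1/2}, …, c^{−1/2}); that is, the maximum of |e_k| over the unit sphere S^{c−1} equals binom(c,k) · c^{−k/2} and is attained at the uniform point. -/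
/-!
Since `|e_k(x)| ≤ e_k(|x|)`, it suffices to bound `e_k` at nonnegative `y` with `∑ y_i² = 1`.
There Maclaurin's inequality `e_k(y) ≤ C(c,k) (∑ y_i / c)^k` and Cauchy–Schwarz `∑ y_i ≤ √c`
give the bound, which the uniform point attains.

For Maclaurin's inequality, differentiate `P = ∏ (X + y_i)` exactly `c - k` times. By Rolle the
result `Q` is still real-rooted; it has degree `k` and nonnegative coefficients, so its roots are
`-t_1, …, -t_k` with `t_j ≥ 0`. Up to factorial factors, the constant and subleading coefficients
of `Q` are `e_k(y)` and `e_1(y)`, while relative to its leading coefficient they are `∏ t_j` and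
`∑ t_j`; AM–GM for the `t_j` finishes.
-/

open Finset

theorem Real.prod_le_mean_pow_card {ι : Type*} (s : Finset ι) {z : ι → ℝ}
    (hz : ∀ i ∈ s, 0 ≤ z i) : ∏ i ∈ s, z i ≤ ((∑ i ∈ s, z i) / #s) ^ #s := by
  rcases s.eq_empty_or_nonempty with rfl | hs
  · simp
  have hn : #s ≠ 0 := hs.card_pos.ne'
  have amgm := Real.geom_mean_le_arith_mean_weighted s (fun _ ↦ (#s : ℝ)⁻¹) z
    (fun _ _ ↦ by positivity) (by simp [hn]) hz
  calc ∏ i ∈ s, z i = (∏ i ∈ s, z i ^ (#s : ℝ)⁻¹) ^ #s := by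
        rw [← prod_pow]
        exact prod_congr rfl fun i hi ↦ (Real.rpow_inv_natCast_pow (hz i hi) hn).symm
    _ ≤ (∑ i ∈ s, (#s : ℝ)⁻¹ * z i) ^ #s := by
        gcongr
        exact prod_nonneg fun i hi ↦ Real.rpow_nonneg (hz i hi) _
    _ = ((∑ i ∈ s, z i) / #s) ^ #s := by rw [← mul_sum, inv_mul_eq_div]

namespace Multiset

theorem prod_le_mean_pow_card {s : Multiset ℝ} (hs : ∀ a ∈ s, 0 ≤ a) :
    s.prod ≤ (s.sum / card s) ^ card s := by
  simpa [← prod_eq_prod_coe, ← sum_eq_sum_coe] using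
    Real.prod_le_mean_pow_card (univ : Finset s) (z := fun a ↦ (a : ℝ)) fun a _ ↦ hs a coe_mem

theorem esymm_nonneg {s : Multiset ℝ} (hs : ∀ a ∈ s, 0 ≤ a) (k : ℕ) : 0 ≤ s.esymm k :=
  sum_nonneg fun _ hu ↦ by
    obtain ⟨t, ht, rfl⟩ := mem_map.1 hu
    exact prod_nonneg fun a ha ↦ hs a (mem_of_le (mem_powersetCard.1 ht).1 ha)

theorem abs_esymm_le_esymm_map_abs (s : Multiset ℝ) (k : ℕ) :
    |s.esymm k| ≤ (s.map abs).esymm k := by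
  rw [esymm, esymm, powersetCard_map, map_map]
  refine (abs_sum_le_sum_abs).trans_eq ?_
  rw [map_map]
  exact congrArg sum (map_congr rfl fun t _ ↦ map_multiset_prod (absHom : ℝ →*₀ ℝ) t)

theorem esymm_replicate {R : Type*} [CommSemiring R] (n k : ℕ) (a : R) :
    (replicate n a).esymm k = n.choose k * a ^ k := by
  have h : ∀ t ∈ powersetCard k (replicate n a), t.prod = a ^ k := fun t ht ↦ by
    obtain ⟨hle, hcard⟩ := mem_powersetCard.1 ht
    rw [eq_replicate_of_mem fun b hb ↦ eq_of_mem_replicate (mem_of_le hle hb), prod_replicate,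
      hcard]
  rw [esymm, map_congr rfl h, map_const', sum_replicate, card_powersetCard, card_replicate,
    nsmul_eq_mul]

end Multiset

namespace Polynomial

theorem Splits.derivative_of_real {p : ℝ[X]} (hp : p.Splits) : (derivative p).Splits := by
  rw [splits_iff_card_roots] at hp ⊢
  have := card_roots_le_derivative p
  have := natDegree_derivative_le p
  exact le_antisymm (card_roots' _) (by omega)

theorem Splits.iterate_derivative_of_real {p : ℝ[X]} (hp : p.Splits) (n : ℕ) :
    (derivative^[n] p).Splits := by
  induction n with
  | zero => exact hp
  | succ n ih => rw [Function.iterate_succ_apply']; exact ih.derivative_of_real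

theorem nonpos_of_mem_roots_of_coeff_nonneg {p : ℝ[X]} (hp : ∀ n, 0 ≤ p.coeff n) {r : ℝ}
    (hr : r ∈ p.roots) : r ≤ 0 := by
  by_contra! hr_pos
  have hp0 : p ≠ 0 := ne_zero_of_mem_roots hr
  have : 0 < p.eval r := by
    rw [eval_eq_sum, sum_def]
    refine sum_pos (fun n hn ↦ ?_) (nonempty_support_iff.2 hp0)
    exact mul_pos ((hp n).lt_of_ne (mem_support_iff.1 hn).symm) (pow_pos hr_pos n)
  exact this.ne' (isRoot_of_mem_roots hr)

theorem Splits.coeff_zero_div_leadingCoeff_le {p : ℝ[X]} (hp : p.Splits)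
    (hroots : ∀ r ∈ p.roots, r ≤ 0) :
    p.coeff 0 / p.leadingCoeff ≤
      (p.nextCoeff / (p.natDegree * p.leadingCoeff)) ^ p.natDegree := by
  rcases eq_or_ne p 0 with rfl | hp0
  · simp
  have hlc : p.leadingCoeff ≠ 0 := leadingCoeff_ne_zero.2 hp0
  set t := p.roots.map Neg.neg
  have hcard : Multiset.card t = p.natDegree := by
    rw [Multiset.card_map, hp.natDegree_eq_card_roots]
  have hprod : p.coeff 0 / p.leadingCoeff = t.prod := by
    rw [hp.coeff_zero_eq_leadingCoeff_mul_prod_roots, Multiset.prod_map_neg,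
      hp.natDegree_eq_card_roots]
    field_simp
  have hsum : p.nextCoeff / (p.natDegree * p.leadingCoeff) = t.sum / Multiset.card t := by
    rw [hp.nextCoeff_eq_neg_sum_roots_mul_leadingCoeff, Multiset.sum_map_neg', hcard]
    field_simp
  rw [hprod, hsum, ← hcard]
  refine Multiset.prod_le_mean_pow_card fun a ha ↦ ?_
  obtain ⟨r, hr, rfl⟩ := Multiset.mem_map.1 ha
  exact neg_nonneg.2 (hroots r hr)

theorem coeff_iterate_derivative_prod_X_add_C {R : Type*} [CommSemiring R] (s : Multiset R)
    {k m : ℕ} (hk : k ≤ Multiset.card s) (hm : m ≤ k) :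
    (derivative^[Multiset.card s - k] (s.map fun a ↦ X + C a).prod).coeff m =
      (m + (Multiset.card s - k)).descFactorial (Multiset.card s - k) * s.esymm (k - m) := by
  rw [coeff_iterate_derivative, nsmul_eq_mul, Multiset.prod_X_add_C_coeff s (by omega)]
  congr 2
  omega

theorem natDegree_iterate_derivative_prod_X_add_C_le {R : Type*} [CommSemiring R] (s : Multiset R)
    (k : ℕ) :
    (derivative^[Multiset.card s - k] (s.map fun a ↦ X + C a).prod).natDegree ≤ k := by
  nontriviality R
  have hP : (s.map fun a ↦ X + C a).prod.natDegree = Multiset.card s := by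
    simp [natDegree_multiset_prod_of_monic, monic_X_add_C]
  have := natDegree_iterate_derivative (s.map fun a ↦ X + C a).prod (Multiset.card s - k)
  omega

end Polynomial

theorem Nat.cast_descFactorial_sub_one_div {k c : ℕ} (hk : 1 ≤ k) (hkc : k ≤ c) :
    ((c - 1).descFactorial (c - k) : ℝ) / (k * c.descFactorial (c - k)) = 1 / c := by
  obtain ⟨n, rfl⟩ : ∃ n, c = n + 1 := ⟨c - 1, by omega⟩
  have h := Nat.succ_descFactorial_succ n (n + 1 - k)
  rw [Nat.descFactorial_succ, show n + 1 - (n + 1 - k) = k by omega] at h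
  have hD : 0 < (n + 1).descFactorial (n + 1 - k) := Nat.descFactorial_pos.2 (by omega)
  have hk' : (0 : ℝ) < k := by exact_mod_cast hk
  rw [Nat.add_sub_cancel, div_eq_div_iff (by positivity) (by positivity), one_mul]
  exact_mod_cast (h.trans (mul_comm _ _)).symm

open Polynomial in
theorem Multiset.esymm_le_choose_mul_mean_pow {s : Multiset ℝ} (hs : ∀ a ∈ s, 0 ≤ a)
    (k : ℕ) : s.esymm k ≤ (card s).choose k * (s.sum / card s) ^ k := by
  rcases Nat.eq_zero_or_pos k with rfl | hk
  · simp [esymm]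
  rcases lt_or_ge (card s) k with hsk | hkc
  · simp [esymm, powersetCard_eq_empty _ hsk, Nat.choose_eq_zero_of_lt hsk]
  set c := card s
  set d := c - k
  set Q := derivative^[d] (s.map fun a ↦ X + C a).prod
  have hQ : ∀ m ≤ k, Q.coeff m = (m + d).descFactorial d * s.esymm (k - m) :=
    fun m hm ↦ coeff_iterate_derivative_prod_X_add_C s hkc hm
  have hQ0 : Q.coeff 0 = d.factorial * s.esymm k := by
    simpa [Nat.descFactorial_self] using hQ 0 k.zero_le
  have hQk : Q.coeff k = c.descFactorial d := by
    simpa [show k + d = c by omega, esymm] using hQ k le_rfl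
  have hQk1 : Q.coeff (k - 1) = (c - 1).descFactorial d * s.sum := by
    simpa [show k - 1 + d = c - 1 by omega, show k - (k - 1) = 1 by omega, esymm,
      powersetCard_one] using hQ (k - 1) (by omega)
  have hD : 0 < c.descFactorial d := Nat.descFactorial_pos.2 (by omega)
  have hdeg : Q.natDegree = k :=
    (natDegree_iterate_derivative_prod_X_add_C_le s k).antisymm
      (le_natDegree_of_ne_zero (by rw [hQk]; positivity))
  have hQ_nonneg (m : ℕ) : 0 ≤ Q.coeff m := by
    rcases le_or_gt m k with hm | hm
    · rw [hQ m hm]; exact mul_nonneg (by positivity) (esymm_nonneg hs _)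
    · rw [coeff_eq_zero_of_natDegree_lt (hdeg ▸ hm)]
  have hsplits : Q.Splits :=
    (Splits.multisetProd (by simp [Splits.X_add_C])).iterate_derivative_of_real d
  have key := hsplits.coeff_zero_div_leadingCoeff_le
    fun r hr ↦ nonpos_of_mem_roots_of_coeff_nonneg hQ_nonneg hr
  rw [leadingCoeff, nextCoeff_of_natDegree_pos (by omega), hdeg, hQ0, hQk, hQk1] at key
  have hchoose : (c.descFactorial d : ℝ) = d.factorial * c.choose k := by
    rw [Nat.descFactorial_eq_factorial_mul_choose,
      Nat.choose_symm_of_eq_add (show c = d + k by omega), Nat.cast_mul]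
  have hmean : ((c - 1).descFactorial d : ℝ) * s.sum / (k * c.descFactorial d) = s.sum / c := by
    rw [mul_comm, mul_div_assoc, Nat.cast_descFactorial_sub_one_div hk hkc, mul_one_div]
  rw [hmean, hchoose, mul_div_mul_left _ _ (by positivity),
    div_le_iff₀' (Nat.cast_pos.2 (Nat.choose_pos hkc))] at key
  exact key

theorem Real.rpow_neg_one_half_pow {x : ℝ} (hx : 0 ≤ x) (k : ℕ) :
    (x ^ (-(1 : ℝ) / 2)) ^ k = x ^ (-(k : ℝ) / 2) := by
  rw [← Real.rpow_natCast, ← Real.rpow_mul hx]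
  ring_nf

theorem sum_abs_div_card_le_rpow_neg_one_half {ι : Type*} [Fintype ι] {x : ι → ℝ}
    (hx : ∑ i, x i ^ 2 = 1) :
    (∑ i, |x i|) / Fintype.card ι ≤ (Fintype.card ι : ℝ) ^ (-(1 : ℝ) / 2) := by
  have hcs := sq_sum_le_card_mul_sum_sq (s := univ) (f := fun i ↦ |x i|)
  simp only [sq_abs, hx, mul_one, card_univ] at hcs
  rw [neg_div, Real.rpow_neg (Nat.cast_nonneg _), ← Real.sqrt_eq_rpow, ← one_div,
    ← Real.sqrt_div_self']
  gcongr
  exact Real.le_sqrt_of_sq_le hcs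

open MvPolynomial

theorem stmt_14 (k c : ℕ) (hk : 1 ≤ k) (hkc : k ≤ c) :
    (∀ x : Fin c → ℝ, (∑ i, x i ^ 2) = 1 →
      |MvPolynomial.eval x (MvPolynomial.esymm (Fin c) ℝ k)| ≤
        (Nat.choose c k : ℝ) * (c : ℝ) ^ (-(k : ℝ) / 2)) ∧
    (∑ _i : Fin c, ((c : ℝ) ^ (-(1 : ℝ) / 2)) ^ 2) = 1 ∧
    MvPolynomial.eval (fun _ => (c : ℝ) ^ (-(1 : ℝ) / 2)) (MvPolynomial.esymm (Fin c) ℝ k) =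
      (Nat.choose c k : ℝ) * (c : ℝ) ^ (-(k : ℝ) / 2) := by
  have hc : (c : ℝ) ≠ 0 := Nat.cast_ne_zero.2 (by omega)
  have heval (f : Fin c → ℝ) : eval f (esymm (Fin c) ℝ k) = (univ.val.map f).esymm k :=
    aeval_esymm_eq_multiset_esymm _ _ _ _
  simp only [heval]
  refine ⟨fun x hx ↦ ?_, ?_, ?_⟩
  · set y := univ.val.map x
    have hcard : Multiset.card (y.map abs) = c := by simp [y]
    have hsum : (y.map abs).sum = ∑ i, |x i| := by rw [Multiset.map_map]; rfl
    calc |y.esymm k| ≤ (y.map abs).esymm k := y.abs_esymm_le_esymm_map_abs k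
      _ ≤ c.choose k * ((∑ i, |x i|) / c) ^ k := by
          simpa [hcard, hsum] using (y.map abs).esymm_le_choose_mul_mean_pow (by simp) k
      _ ≤ c.choose k * ((c : ℝ) ^ (-(1 : ℝ) / 2)) ^ k := by
          gcongr
          simpa using sum_abs_div_card_le_rpow_neg_one_half hx
      _ = c.choose k * (c : ℝ) ^ (-(k : ℝ) / 2) := by
          rw [Real.rpow_neg_one_half_pow (Nat.cast_nonneg c)]
  · simp [Real.rpow_neg_one_half_pow (Nat.cast_nonneg c), Real.rpow_neg_one, hc]
  · rw [Multiset.map_const', Multiset.esymm_replicate,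
      Real.rpow_neg_one_half_pow (Nat.cast_nonneg c)]
    simp
end
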